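/- arXiv:2512.10937 — 5 statements merged into one kernel-verified Lean document; each statement's English description precedes it below -/
import Mathlib

section
/- Let W : P × O → F × I be a one-input process function, i.e., for every function f : I → O and every p ∈ P, the equation o = f(W(p,o).2) has a unique solution o ∈ O. Then the I-component of W is independent of its second argument: for all p ∈ P and o, o' ∈ O, W(p,o).2 = W(p,o').2. -/
/-- If `g o ≠ g o'`, the map `I → O` sending `g o` to `o` and everything else to `o'` gives
`o ↦ f (g o)` the two fixed points `o` and `o'`. -/
theorem apply_eq_apply_of_forall_existsUnique_eq_comp {O I : Type*} (g : O → I)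
    (h : ∀ f : I → O, ∃! o, o = f (g o)) (o o' : O) : g o = g o' := by
  classical
  by_contra hne
  let f : I → O := fun i => if i = g o then o else o'
  have hfo : o = f (g o) := by simp [f]
  have hfo' : o' = f (g o') := by simp [f, Ne.symm hne]
  exact hne (congrArg g ((h f).unique hfo hfo'))

/-- The I-component of a one-input process function is independent
of its observation argument. -/
theorem stmt_0 {P O F I : Type*} (W : P × O → F × I)
    (hW : ∀ (f : I → O) (p : P), ∃! o : O, o = f (W (p, o)).2) :
    ∀ (p : P) (o o' : O), (W (p, o)).2 = (W (p, o')).2 := fun p =>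
  apply_eq_apply_of_forall_existsUnique_eq_comp (fun o => (W (p, o)).2) (fun f => hW f p)
end

section
/- Let W : P × O → F × I be a one-input process function. Then there exist functions w_F : P × O → F and w_I : P → I such that W(p,o) = (w_F(p,o), w_I(p)) for all p ∈ P and o ∈ O. -/
/-- Decomposition of one-input process functions. -/
theorem stmt_1 {P O F I : Type*} (W : P × O → F × I)
    (hW : ∀ (f : I → O) (p : P), ∃! o : O, o = f (W (p, o)).2) :
    ∃ (wF : P × O → F) (wI : P → I),
      ∀ (p : P) (o : O), W (p, o) = (wF (p, o), wI p) := by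
  classical
  -- W(p,o).2 is independent of o
  have hconst : ∀ p o₁ o₂, (W (p, o₁)).2 = (W (p, o₂)).2 := by
    intro p o₁ o₂
    by_cases ho : o₁ = o₂
    · rw [ho]
    · by_contra hi
      set i₁ := (W (p, o₁)).2
      have h := hW (fun i => if i = i₁ then o₁ else o₂) p
      obtain ⟨o, _, huniq⟩ := h
      have h1 : o₁ = (fun i => if i = i₁ then o₁ else o₂) (W (p, o₁)).2 := by
        simp [i₁]
      have h2 : o₂ = (fun i => if i = i₁ then o₁ else o₂) (W (p, o₂)).2 := by
        simp only
        rw [if_neg (fun h => hi h.symm)]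
      exact ho ((huniq o₁ h1).trans (huniq o₂ h2).symm)
  have key : ∀ p, ∃ i : I, ∀ o, (W (p, o)).2 = i := by
    intro p
    by_cases hO : Nonempty O
    · exact ⟨(W (p, hO.some)).2, fun o => hconst p o hO.some⟩
    · by_cases hI : Nonempty I
      · exact ⟨hI.some, fun o => (hO ⟨o⟩).elim⟩
      · obtain ⟨o, _, _⟩ := hW (fun i => (hI ⟨i⟩).elim) p
        exact (hO ⟨o⟩).elim
  choose wI hwI using key
  exact ⟨fun po => (W po).1, wI, fun p o => Prod.ext rfl (hwI p o)⟩
end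

section
/- Conversely, if two deterministic agents A and B are equivalent (one-step interactions agree on all deterministic POMDPs), then their associated process functions are equal as functions M × Ω → M × A. In particular, a witnessing POMDP can be chosen with state space S = Ω × A, transition T((o,a'),a) = (o₀, a) for a fixed o₀ ∈ Ω, observation O((o,a'),a) = o and constant reward 1. -/
/-! Run both agents in a POMDP whose state is a pair (observation, last action): it emits the
observation stored in the state and overwrites the stored action with the one just taken. One
step from the state `(o, a)` then reveals the updated memory `U (m, π m, o)` and, in the next
state, the action `π m`; so agreement of the one-step interactions is agreement of the process
functions. -/

/-- One-step interaction of an agent `(π, U)` with a POMDP `(T, O, R)`. -/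
def agentStep {M A Ω S : Type} (π : M → A) (U : M × A × Ω → M)
    (T : S × A → S) (O : S × A → Ω) (R : S × A → ℝ) (m : M) (s : S) :
    M × S × ℝ :=
  (U (m, π m, O (s, π m)), T (s, π m), R (s, π m))

section RecordingPOMDP

variable {M A Ω : Type}

/-- The paper's process function `w`. -/
def processFunction (π : M → A) (U : M × A × Ω → M) : M × Ω → M × A :=
  fun mo => (U (mo.1, π mo.1, mo.2), π mo.1)

def recordingTransition : (Ω × A) × A → Ω × A := fun p => (p.1.1, p.2)

def recordingObservation : (Ω × A) × A → Ω := fun p => p.1.1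

theorem agentStep_recording (π : M → A) (U : M × A × Ω → M) (R : (Ω × A) × A → ℝ)
    (m : M) (o : Ω) (a : A) :
    agentStep π U recordingTransition recordingObservation R m (o, a) =
      (U (m, π m, o), (o, π m), R ((o, a), π m)) :=
  rfl

theorem processFunction_eq_of_agentStep_recording_eq
    (πA : M → A) (UA : M × A × Ω → M) (πB : M → A) (UB : M × A × Ω → M)
    (R : (Ω × A) × A → ℝ)
    (h : ∀ (m : M) (o : Ω), ∃ a : A,
      agentStep πA UA recordingTransition recordingObservation R m (o, a) =
        agentStep πB UB recordingTransition recordingObservation R m (o, a)) :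
    processFunction πA UA = processFunction πB UB := by
  funext ⟨m, o⟩
  obtain ⟨a, hstep⟩ := h m o
  simp only [agentStep_recording, Prod.mk.injEq] at hstep
  obtain ⟨hmemory, ⟨-, haction⟩, -⟩ := hstep
  exact Prod.ext hmemory haction

end RecordingPOMDP

theorem stmt_7_general {M A Ω : Type}
    (πA : M → A) (UA : M × A × Ω → M) (πB : M → A) (UB : M × A × Ω → M)
    (hequiv : ∀ (S : Type) (T : S × A → S) (O : S × A → Ω) (R : S × A → ℝ)
      (m : M) (s : S),
      agentStep πA UA T O R m s = agentStep πB UB T O R m s) :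
    (fun mo : M × Ω => ((UA (mo.1, πA mo.1, mo.2), πA mo.1) : M × A)) =
    (fun mo : M × Ω => (UB (mo.1, πB mo.1, mo.2), πB mo.1)) :=
  processFunction_eq_of_agentStep_recording_eq πA UA πB UB (fun _ => 1)
    fun m o => ⟨πA m, hequiv _ _ _ _ m (o, πA m)⟩

/-- If two agents are equivalent (one-step interactions agree on
all deterministic POMDPs), then their associated process functions are equal
as functions `M × Ω → M × A`. -/
theorem stmt_7 {M A Ω : Type} [Nonempty M] [Nonempty A] [Nonempty Ω]
    (πA : M → A) (UA : M × A × Ω → M) (πB : M → A) (UB : M × A × Ω → M)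
    (hequiv : ∀ (S : Type) (T : S × A → S) (O : S × A → Ω) (R : S × A → ℝ)
      (m : M) (s : S),
      agentStep πA UA T O R m s = agentStep πB UB T O R m s) :
    (fun mo : M × Ω => ((UA (mo.1, πA mo.1, mo.2), πA mo.1) : M × A)) =
    (fun mo : M × Ω => (UB (mo.1, πB mo.1, mo.2), πB mo.1)) :=
  stmt_7_general πA UA πB UB hequiv
end

section
/- There is a bijection between equivalence classes of deterministic agents (with memory M, actions A, observations Ω, where two agents are equivalent iff they induce the same one-step interaction on every deterministic POMDP) and one-input process functions w : M × Ω → M × A. -/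
/-- A deterministic agent with memory `M`, actions `A`, observations `Ω`. -/
structure Agent (M A Ω : Type) where
  policy : M → A
  update : M × A × Ω → M

/-- One-step interaction of an agent with a POMDP `(T, O, R)`. -/
def Agent.step {M A Ω S : Type} (ag : Agent M A Ω)
    (T : S × A → S) (O : S × A → Ω) (R : S × A → ℝ) (m : M) (s : S) :
    M × S × ℝ :=
  (ag.update (m, ag.policy m, O (s, ag.policy m)),
    T (s, ag.policy m), R (s, ag.policy m))

/-- Behavioural equivalence of agents: same one-step interaction on every
deterministic POMDP. -/
def agentSetoid (M A Ω : Type) : Setoid (Agent M A Ω) where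
  r ag bg := ∀ (S : Type) (T : S × A → S) (O : S × A → Ω) (R : S × A → ℝ)
      (m : M) (s : S), ag.step T O R m s = bg.step T O R m s
  iseqv := by
    constructor
    · intro _ _ _ _ _ _ _; rfl
    · intro _ _ h S T O R m s; exact (h S T O R m s).symm
    · intro _ _ _ h1 h2 S T O R m s; exact (h1 S T O R m s).trans (h2 S T O R m s)

/-!
An agent's behaviour on every POMDP is determined by the map `(m, o) ↦ (U(m, π m, o), π m)`:
a POMDP whose state records the last action and fixes the next observation reads off
both `π m` and every `U(m, π m, o)`. Conversely, a one-input process function cannot let its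
action depend on the observation: if `(w (m, o)).2 ≠ (w (m, o')).2`, the map `f` sending
`(w (m, o)).2` to `o` and everything else to `o'` has the two solutions `o` and `o'`.
So `w` splits as a policy `m ↦ (w (m, o₀)).2` and an update `(m, a, o) ↦ (w (m, o)).1`.
-/

def IsOneInputProcessFn {M A Ω : Type} (w : M × Ω → M × A) : Prop :=
  ∀ (f : A → Ω) (m : M), ∃! o : Ω, o = f (w (m, o)).2

theorem IsOneInputProcessFn.snd_eq {M A Ω : Type} {w : M × Ω → M × A}
    (hw : IsOneInputProcessFn w) (m : M) (o o' : Ω) : (w (m, o)).2 = (w (m, o')).2 := by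
  classical
  by_contra hne
  obtain ⟨_, _, huniq⟩ := hw (fun a => if a = (w (m, o)).2 then o else o') m
  have ho : o = o' := (huniq o (by simp)).trans (huniq o' (by simp [Ne.symm hne])).symm
  exact hne (ho ▸ rfl)

namespace Agent

variable {M A Ω : Type}

def processFn (ag : Agent M A Ω) : M × Ω → M × A :=
  fun p => (ag.update (p.1, ag.policy p.1, p.2), ag.policy p.1)

theorem isOneInputProcessFn_processFn (ag : Agent M A Ω) :
    IsOneInputProcessFn ag.processFn :=
  fun f m => ⟨f (ag.policy m), rfl, fun _ ho => ho⟩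

def toProcessFn (ag : Agent M A Ω) : { w : M × Ω → M × A // IsOneInputProcessFn w } :=
  ⟨ag.processFn, ag.isOneInputProcessFn_processFn⟩

theorem agentSetoid_iff_processFn_eq {ag bg : Agent M A Ω} :
    agentSetoid M A Ω ag bg ↔ ag.processFn = bg.processFn := by
  constructor
  · intro h
    funext ⟨m, o⟩
    have hstep := h (Ω × A) (fun sa => (sa.1.1, sa.2)) (fun sa => sa.1.1) (fun _ => 0)
      m (o, ag.policy m)
    simp only [step, Prod.mk.injEq, true_and, and_true] at hstep
    exact Prod.ext hstep.1 hstep.2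
  · intro h S T O R m s
    have hpolicy : ag.policy m = bg.policy m :=
      congrArg Prod.snd (congrFun h (m, O (s, ag.policy m)))
    have hupdate (o : Ω) : ag.update (m, ag.policy m, o) = bg.update (m, bg.policy m, o) :=
      congrArg Prod.fst (congrFun h (m, o))
    simp only [step]
    rw [hupdate, hpolicy]

theorem agentSetoid_eq_ker_toProcessFn : agentSetoid M A Ω = Setoid.ker toProcessFn :=
  Setoid.ext fun _ _ => agentSetoid_iff_processFn_eq.trans
    (Subtype.ext_iff.symm.trans (Setoid.ker_def (f := toProcessFn)).symm)

noncomputable def ofProcessFn [Nonempty Ω] (w : M × Ω → M × A) : Agent M A Ω where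
  policy m := (w (m, Classical.arbitrary Ω)).2
  update x := (w (x.1, x.2.2)).1

theorem processFn_ofProcessFn [Nonempty Ω] {w : M × Ω → M × A} (hw : IsOneInputProcessFn w) :
    (ofProcessFn w).processFn = w := by
  funext ⟨m, o⟩
  exact Prod.ext rfl (hw.snd_eq m _ o)

end Agent

theorem stmt_8_general (M A Ω : Type) [Nonempty Ω] :
    Nonempty (Quotient (agentSetoid M A Ω) ≃
      { w : M × Ω → M × A //
        ∀ (f : A → Ω) (m : M), ∃! o : Ω, o = f (w (m, o)).2 }) :=
  ⟨(Equiv.cast (congrArg Quotient Agent.agentSetoid_eq_ker_toProcessFn)).trans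
    (Setoid.quotientKerEquivOfRightInverse Agent.toProcessFn (fun w => Agent.ofProcessFn w.1)
      fun w => Subtype.ext (Agent.processFn_ofProcessFn w.2))⟩

/-- There is a bijection between equivalence classes of
deterministic agents and one-input process functions `w : M × Ω → M × A`. -/
theorem stmt_8 (M A Ω : Type) [Nonempty M] [Nonempty A] [Nonempty Ω] :
    Nonempty (Quotient (agentSetoid M A Ω) ≃
      { w : M × Ω → M × A //
        ∀ (f : A → Ω) (m : M), ∃! o : Ω, o = f (w (m, o)).2 }) :=
  stmt_8_general M A Ω
end

section
/- Every n-input process function w : P × Ω₁ × ⋯ × Ωₙ → F × A₁ × ⋯ × Aₙ has the property that each action component w_{A_i} is independent of the i-th observation: for all p, and all o⃗, o⃗' that differ only in the i-th coordinate, w_{A_i}(p, o⃗) = w_{A_i}(p, o⃗'). -/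
/-!
If the `i`-th action depended on the `i`-th observation, say `g o i ≠ g o' i` for observations
`o`, `o'` differing only at `i`, then the intervention in which every party `j ≠ i` outputs `o j`
and party `i` outputs `o i` on the action `g o i` and `o' i` on every other action would have
both `o` and `o'` as consistent solutions, contradicting uniqueness.
-/

theorem apply_eq_of_forall_ne_eq_of_subsingleton_fixedPoints {ι : Type*} {Ω A : ι → Type*}
    {g : (∀ i, Ω i) → ∀ i, A i}
    (huniq : ∀ f : ∀ i, A i → Ω i, {o | ∀ i, o i = f i (g o i)}.Subsingleton)
    {i : ι} {o o' : ∀ j, Ω j} (hoo' : ∀ j, j ≠ i → o j = o' j) : g o i = g o' i := by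
  classical
  by_contra hne
  let f : ∀ j, A j → Ω j :=
    Function.update (fun j _ => o j) i fun a => if a = g o i then o i else o' i
  have hsol : ∀ j, o j = f j (g o j) := by
    intro j
    by_cases hj : j = i
    · subst hj; simp [f]
    · simp [f, hj]
  have hsol' : ∀ j, o' j = f j (g o' j) := by
    intro j
    by_cases hj : j = i
    · subst hj; simp [f, Ne.symm hne]
    · simp [f, hj, hoo' j hj]
  exact hne (congrArg (g · i) (huniq f hsol hsol'))

theorem stmt_14_general {n : ℕ} {P F : Type*} {Ω A : Fin n → Type*}
    (w : P × (∀ i, Ω i) → F × (∀ i, A i))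
    (hw : ∀ (f : ∀ i, A i → Ω i) (p : P),
      ∃! o : ∀ i, Ω i, ∀ i, o i = f i ((w (p, o)).2 i)) :
    ∀ (p : P) (i : Fin n) (o o' : ∀ j, Ω j),
      (∀ j, j ≠ i → o j = o' j) → (w (p, o)).2 i = (w (p, o')).2 i :=
  fun p _ _ _ hoo' =>
    apply_eq_of_forall_ne_eq_of_subsingleton_fixedPoints
      (g := fun o => (w (p, o)).2) (fun f _ ho _ ho' => (hw f p).unique ho ho') hoo'

/-- Each action component of an `n`-input process function is
independent of its own party's observation. -/
theorem stmt_14 {n : ℕ} {P F : Type*} {Ω A : Fin n → Type*}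
    [∀ i, Nontrivial (Ω i)]
    (w : P × (∀ i, Ω i) → F × (∀ i, A i))
    (hw : ∀ (f : ∀ i, A i → Ω i) (p : P),
      ∃! o : ∀ i, Ω i, ∀ i, o i = f i ((w (p, o)).2 i)) :
    ∀ (p : P) (i : Fin n) (o o' : ∀ j, Ω j),
      (∀ j, j ≠ i → o j = o' j) → (w (p, o)).2 i = (w (p, o')).2 i :=
  stmt_14_general w hw
end
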